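/- For every real h > 0, the function K_h(z) = Σ_{m=0}^∞ ((h)_m² / ((2h)_m m!)) z^{h+m} satisfies the Casimir differential equation z²(1−z) K_h''(z) − z² K_h'(z) = h(h−1) K_h(z) for all z in (0,1). -/

import Mathlib

/-- Pochhammer symbol `(x)_m = x(x+1)⋯(x+m−1)`, with `(x)_0 = 1`. -/
noncomputable def poch (x : ℝ) : ℕ → ℝ
  | 0 => 1
  | m + 1 => poch x m * (x + m)

/-- sl(2) conformal block `K_h(z) = Σ_m ((h)_m² / ((2h)_m m!)) z^{h+m}`. -/
noncomputable def Kblock (h z : ℝ) : ℝ :=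
  ∑' m : ℕ, (poch h m)^2 / (poch (2*h) m * (m.factorial : ℝ)) * z ^ (h + (m : ℝ))

/-!
Write `K_h(z) = ∑ c_m z^(h+m)` with `c_m = (h)_m² / ((2h)_m m!)`. Since
`c_(m+1) / c_m = (h+m)² / ((m+1)(2h+m))` is eventually `≤ 1`, the power series `∑ c_m z^m` and
all its termwise derivatives converge on `(0,1)`, so `K_h` may be differentiated termwise there.
Applied termwise, `z²(1−z)∂² − z²∂ − h(h−1)` sends `c_m z^(h+m)` to
`c_m m(2h−1+m) z^(h+m) − c_m (h+m)² z^(h+m+1)`, and the two resulting series cancel after an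
index shift by the recursion `c_(m+1) (m+1)(2h+m) = c_m (h+m)²`.
-/

open Filter Real Set Topology

lemma poch_pos {x : ℝ} (hx : 0 < x) : ∀ m, 0 < poch x m
  | 0 => one_pos
  | m + 1 => mul_pos (poch_pos hx m) (by positivity)

lemma rpow_le_rpow_add_rpow_of_mem_Icc {ε r x : ℝ} (hε : 0 < ε) (hx : x ∈ Icc ε r) (p : ℝ) :
    x ^ p ≤ ε ^ p + r ^ p := by
  have hx0 : 0 < x := hε.trans_le hx.1
  rcases le_or_gt 0 p with hp | hp
  · linarith [rpow_le_rpow hx0.le hx.2 hp, rpow_pos_of_pos hε p]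
  · linarith [rpow_le_rpow_of_nonpos hε hx.1 hp.le, rpow_pos_of_pos (hx0.trans_le hx.2) p]

lemma tsum_mul_rpow_add {y : ℝ} (hy : 0 < y) (a : ℕ → ℝ) (s : ℝ) :
    ∑' n, a n * y ^ (s + n) = y ^ s * ∑' n, a n * y ^ n := by
  rw [← tsum_mul_left]
  congr 1 with n
  rw [rpow_add hy, rpow_natCast]
  ring

lemma Summable.of_abs_mul_pow {b : ℕ → ℝ} {r : ℝ} (hr : 0 ≤ r)
    (hb : Summable fun n => |b n| * r ^ n) : Summable fun n => b n * r ^ n :=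
  .of_abs (hb.congr fun n => by rw [abs_mul, abs_of_nonneg (pow_nonneg hr n)])

section RpowSeries

variable {a : ℕ → ℝ}

lemma summable_abs_mul_add_mul_pow (ha : ∀ r ∈ Ioo (0 : ℝ) 1, Summable fun n => |a n| * r ^ n)
    (s : ℝ) : ∀ r ∈ Ioo (0 : ℝ) 1, Summable fun n => |a n * (s + n)| * r ^ n := by
  rintro r ⟨hr0, hr1⟩
  obtain ⟨ρ, hrρ, hρ1⟩ := exists_between hr1
  have hρ0 : 0 < ρ := hr0.trans hrρ
  have hq : |r / ρ| < 1 := by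
    rw [abs_of_pos (div_pos hr0 hρ0), div_lt_one hρ0]
    exact hrρ
  -- `(|s| + n) (r/ρ)^n → 0`, so the weight `s + n` is absorbed by passing from `r` to `ρ`
  have hlim : Tendsto (fun n : ℕ => (|s| + n) * (r / ρ) ^ n) atTop (𝓝 0) := by
    have h0 := (tendsto_pow_atTop_nhds_zero_of_abs_lt_one hq).const_mul |s|
    have h1 := tendsto_pow_const_mul_const_pow_of_abs_lt_one 1 hq
    simpa only [pow_one, mul_zero, add_zero, add_mul, mul_assoc] using h0.add h1
  refine (ha ρ ⟨hρ0, hρ1⟩).of_norm_bounded_eventually_nat ?_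
  filter_upwards [hlim.eventually (ge_mem_nhds one_pos)] with n hn
  have hsn : |s + n| ≤ |s| + n := (abs_add_le _ _).trans_eq (by rw [Nat.abs_cast])
  calc ‖|a n * (s + n)| * r ^ n‖ = |a n| * ρ ^ n * (|s + n| * (r / ρ) ^ n) := by
        rw [norm_of_nonneg (by positivity), abs_mul, div_pow]
        field_simp
    _ ≤ |a n| * ρ ^ n * ((|s| + n) * (r / ρ) ^ n) := by gcongr
    _ ≤ |a n| * ρ ^ n := mul_le_of_le_one_right (by positivity) hn

lemma hasDerivAt_tsum_mul_rpow (ha : ∀ r ∈ Ioo (0 : ℝ) 1, Summable fun n => |a n| * r ^ n)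
    (s : ℝ) {y : ℝ} (hy : y ∈ Ioo (0 : ℝ) 1) :
    HasDerivAt (fun x => ∑' n, a n * x ^ (s + n)) (∑' n, a n * (s + n) * y ^ (s - 1 + n)) y := by
  obtain ⟨ε, hε0, hεy⟩ := exists_between hy.1
  obtain ⟨r, hyr, hr1⟩ := exists_between hy.2
  have hmem : y ∈ Ioo ε r := ⟨hεy, hyr⟩
  have hr0 : 0 < r := hy.1.trans hyr
  refine hasDerivAt_tsum_of_isPreconnected (g := fun n x => a n * x ^ (s + n))
    (g' := fun n x => a n * (s + n) * x ^ (s - 1 + n))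
    ((summable_abs_mul_add_mul_pow ha s r ⟨hr0, hr1⟩).mul_left (ε ^ (s - 1) + r ^ (s - 1)))
    isOpen_Ioo isPreconnected_Ioo (fun n x hx => ?_) (fun n x hx => ?_) hmem ?_ hmem
  · have hx0 : x ≠ 0 := (hε0.trans hx.1).ne'
    refine ((hasDerivAt_rpow_const (p := s + n) (Or.inl hx0)).const_mul (a n)).congr_deriv ?_
    rw [show s + (n : ℝ) - 1 = s - 1 + n by ring]
    ring
  · have hx0 : 0 < x := hε0.trans hx.1
    rw [norm_mul, norm_eq_abs, norm_of_nonneg (rpow_nonneg hx0.le _), rpow_add hx0, rpow_natCast,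
      mul_left_comm]
    gcongr
    · exact rpow_le_rpow_add_rpow_of_mem_Icc hε0 (Ioo_subset_Icc_self hx) _
    · exact hx.2.le
  · refine (((ha y hy).of_abs_mul_pow hy.1.le).mul_left (y ^ s)).congr fun n => ?_
    rw [rpow_add hy.1, rpow_natCast]
    ring

lemma deriv_tsum_mul_rpow (ha : ∀ r ∈ Ioo (0 : ℝ) 1, Summable fun n => |a n| * r ^ n)
    (s : ℝ) {y : ℝ} (hy : y ∈ Ioo (0 : ℝ) 1) :
    deriv (fun x => ∑' n, a n * x ^ (s + n)) y = ∑' n, a n * (s + n) * y ^ (s - 1 + n) :=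
  (hasDerivAt_tsum_mul_rpow ha s hy).deriv

lemma deriv_deriv_tsum_mul_rpow (ha : ∀ r ∈ Ioo (0 : ℝ) 1, Summable fun n => |a n| * r ^ n)
    (s : ℝ) {y : ℝ} (hy : y ∈ Ioo (0 : ℝ) 1) :
    deriv (deriv fun x => ∑' n, a n * x ^ (s + n)) y =
      ∑' n, a n * (s + n) * (s - 1 + n) * y ^ (s - 1 - 1 + n) := by
  have hderiv : deriv (fun x => ∑' n, a n * x ^ (s + n)) =ᶠ[𝓝 y]
      fun x => ∑' n, a n * (s + n) * x ^ (s - 1 + n) :=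
    eventually_of_mem (isOpen_Ioo.mem_nhds hy) fun x hx => deriv_tsum_mul_rpow ha s hx
  rw [hderiv.deriv_eq]
  exact deriv_tsum_mul_rpow (summable_abs_mul_add_mul_pow ha s) (s - 1) hy

end RpowSeries

noncomputable def blockCoeff (h : ℝ) (m : ℕ) : ℝ :=
  poch h m ^ 2 / (poch (2 * h) m * m.factorial)

lemma Kblock_eq (h : ℝ) : Kblock h = fun z => ∑' m : ℕ, blockCoeff h m * z ^ (h + m) := rfl

section BlockCoeff

variable {h : ℝ}

lemma blockCoeff_pos (hh : 0 < h) (m : ℕ) : 0 < blockCoeff h m :=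
  div_pos (pow_pos (poch_pos hh m) 2) (mul_pos (poch_pos (by positivity) m) (by positivity))

lemma blockCoeff_succ_mul (hh : 0 < h) (n : ℕ) :
    blockCoeff h (n + 1) * ((n + 1) * (2 * h + n)) = blockCoeff h n * (h + n) ^ 2 := by
  have h2 : poch (2 * h) n ≠ 0 := (poch_pos (by positivity) n).ne'
  have h4 : 2 * h + (n : ℝ) ≠ 0 := by positivity
  simp only [blockCoeff, poch, Nat.factorial_succ]
  push_cast
  field_simp

lemma blockCoeff_succ_le (hh : 0 < h) {n : ℕ} (hn : h ^ 2 ≤ n) :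
    blockCoeff h (n + 1) ≤ blockCoeff h n := by
  have hpos : (0 : ℝ) < (n + 1) * (2 * h + n) := by positivity
  refine le_of_mul_le_mul_right ?_ hpos
  rw [blockCoeff_succ_mul hh]
  gcongr
  · exact (blockCoeff_pos hh n).le
  · nlinarith

lemma summable_abs_blockCoeff_mul_pow (hh : 0 < h) :
    ∀ r ∈ Ioo (0 : ℝ) 1, Summable fun n => |blockCoeff h n| * r ^ n := by
  rintro r ⟨hr0, hr1⟩
  refine summable_of_ratio_norm_eventually_le hr1 ?_
  filter_upwards [(tendsto_natCast_atTop_atTop (R := ℝ)).eventually_ge_atTop (h ^ 2)] with n hn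
  simp only [norm_mul, norm_pow, norm_eq_abs, abs_of_pos hr0,
    abs_of_pos (blockCoeff_pos hh _), pow_succ]
  nlinarith [mul_le_mul_of_nonneg_right (blockCoeff_succ_le hh hn) (pow_pos hr0 n).le]

lemma blockCoeff_series_identity (hh : 0 < h) {z : ℝ} (hz : z ∈ Ioo (0 : ℝ) 1) :
    (1 - z) * ∑' n, blockCoeff h n * (h + n) * (h - 1 + n) * z ^ n
      - z * ∑' n, blockCoeff h n * (h + n) * z ^ n
      = h * (h - 1) * ∑' n, blockCoeff h n * z ^ n := by
  have hc := summable_abs_blockCoeff_mul_pow hh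
  have hB := summable_abs_mul_add_mul_pow hc h
  have sC := (hc z hz).of_abs_mul_pow hz.1.le
  have sB := (hB z hz).of_abs_mul_pow hz.1.le
  have sA := (summable_abs_mul_add_mul_pow hB (h - 1) z hz).of_abs_mul_pow hz.1.le
  set D := fun n : ℕ => blockCoeff h n * ((h + n) * (h - 1 + n) - h * (h - 1)) * z ^ n
  have sD : Summable D := (sA.sub (sC.mul_left (h * (h - 1)))).congr fun n => by ring
  have hD : ∑' n, blockCoeff h n * (h + n) * (h - 1 + n) * z ^ n
      - h * (h - 1) * ∑' n, blockCoeff h n * z ^ n = ∑' n, D n := by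
    rw [← tsum_mul_left, ← sA.tsum_sub (sC.mul_left _)]
    exact tsum_congr fun n => by ring
  -- `D 0 = 0`, and by the recursion `D (n + 1) = z * (blockCoeff h n * (h + n) ^ 2 * z ^ n)`
  have hshift : ∑' n, D n = z * (∑' n, blockCoeff h n * (h + n) * (h - 1 + n) * z ^ n
      + ∑' n, blockCoeff h n * (h + n) * z ^ n) := by
    rw [sD.tsum_eq_zero_add, ← sA.tsum_add sB, ← tsum_mul_left]
    simp only [D, Nat.cast_zero, add_zero, sub_self, mul_zero, zero_mul, zero_add]
    refine tsum_congr fun n => ?_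
    push_cast
    linear_combination z ^ (n + 1) * blockCoeff_succ_mul hh n
  linear_combination hD + hshift

end BlockCoeff

/-- The sl(2) block is an eigenfunction of the conformal Casimir operator
`D = z²(1−z)∂² − z²∂` with eigenvalue `h(h−1)`. -/
theorem stmt_17 (h : ℝ) (hh : 0 < h) :
    ∀ z ∈ Set.Ioo (0 : ℝ) 1,
      z^2 * (1 - z) * deriv (deriv (Kblock h)) z - z^2 * deriv (Kblock h) z
        = h * (h - 1) * Kblock h z := by
  intro z hz
  have hc := summable_abs_blockCoeff_mul_pow hh
  simp only [Kblock_eq]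
  rw [deriv_deriv_tsum_mul_rpow hc h hz, deriv_tsum_mul_rpow hc h hz,
    tsum_mul_rpow_add hz.1, tsum_mul_rpow_add hz.1, tsum_mul_rpow_add hz.1,
    rpow_sub_one hz.1.ne', rpow_sub_one hz.1.ne']
  have hz0 := hz.1.ne'
  field_simp
  linear_combination z ^ h * blockCoeff_series_identity hh hz
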